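/- arXiv:2112.02564 — 4 statements merged into one kernel-verified Lean document; each statement's English description precedes it below -/
import Mathlib

section
/- For every finite abelian group G with |G| > 1, c₀(G) ≥ m(G); equivalently, there exists a regular sequence over G of length m(G) − 1 that is not an additive basis of G. -/
/-- The set of sums over nonempty subsequences (sub-multisets) of the sequence `S`. -/
def seqSums {G : Type*} [AddCommGroup G] (S : Multiset G) : Set G :=
  {x | ∃ T : Multiset G, T ≤ S ∧ T ≠ 0 ∧ T.sum = x}

/-- `seqSums S` together with `0`. -/
def seqSums0 {G : Type*} [AddCommGroup G] (S : Multiset G) : Set G :=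
  seqSums S ∪ {0}

open Classical in
/-- A sequence `S` over `G` is regular if for every proper subgroup `H ⊊ G`,
at most `|H| - 1` terms of `S` (counted with multiplicity) lie in `H`. -/
def IsRegularSeq {G : Type*} [AddCommGroup G] (S : Multiset G) : Prop :=
  ∀ H : AddSubgroup G, H ≠ ⊤ →
    Multiset.card (S.filter (fun g => g ∈ H)) ≤ Nat.card H - 1

/-- The Davenport constant: the smallest `t` such that every sequence over `G` of length
at least `t` contains a nonempty zero-sum subsequence. -/
noncomputable def davenport (G : Type*) [AddCommGroup G] : ℕ :=
  sInf {t : ℕ | ∀ S : Multiset G, t ≤ Multiset.card S →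
    ∃ T : Multiset G, T ≤ S ∧ T ≠ 0 ∧ T.sum = 0}

/-- The set of sums over nonempty subsets of the finite set `S`. -/
def setSums {G : Type*} [AddCommGroup G] (S : Finset G) : Set G :=
  {x | ∃ T : Finset G, T ⊆ S ∧ T.Nonempty ∧ (∑ g ∈ T, g) = x}

/-- `setSums S` together with `0`. -/
def setSums0 {G : Type*} [AddCommGroup G] (S : Finset G) : Set G :=
  setSums S ∪ {0}

section Helpers

variable {G : Type*} [AddCommGroup G]

lemma split_le_add {α : Type*} [DecidableEq α] {T A B : Multiset α} (h : T ≤ A + B) :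
    ∃ T₁ T₂, T₁ ≤ A ∧ T₂ ≤ B ∧ T = T₁ + T₂ := by
  refine ⟨T ∩ A, T - A, Multiset.inter_le_right, ?_, ?_⟩
  · rw [Multiset.sub_le_iff_le_add]
    exact h.trans (le_of_eq (add_comm _ _))
  · ext a
    simp only [Multiset.count_add, Multiset.count_inter, Multiset.count_sub]
    omega

lemma le_replicate_iff' {α : Type*} {T : Multiset α} {n : ℕ} {x : α} :
    T ≤ Multiset.replicate n x ↔ ∃ a ≤ n, T = Multiset.replicate a x := by
  constructor
  · intro h
    refine ⟨Multiset.card T, by simpa using Multiset.card_le_card h,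
      Multiset.eq_replicate_card.2 fun b hb =>
        Multiset.eq_of_mem_replicate (Multiset.mem_of_le h hb)⟩
  · rintro ⟨a, ha, rfl⟩
    exact (Multiset.replicate_le_replicate x).2 ha

lemma le_two_replicate {α : Type*} [DecidableEq α] {T : Multiset α} {n m : ℕ} {x y : α}
    (h : T ≤ Multiset.replicate n x + Multiset.replicate m y) :
    ∃ a b, a ≤ n ∧ b ≤ m ∧ T = Multiset.replicate a x + Multiset.replicate b y := by
  obtain ⟨T₁, T₂, h1, h2, rfl⟩ := split_le_add h
  obtain ⟨a, ha, rfl⟩ := le_replicate_iff'.1 h1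
  obtain ⟨b, hb, rfl⟩ := le_replicate_iff'.1 h2
  exact ⟨a, b, ha, hb, rfl⟩

lemma filter_replicate' {α : Type*} (p : α → Prop) [DecidablePred p] (n : ℕ) (x : α) :
    (Multiset.replicate n x).filter p = if p x then Multiset.replicate n x else 0 := by
  split_ifs with h
  · exact Multiset.filter_eq_self.2 fun b hb => (Multiset.eq_of_mem_replicate hb) ▸ h
  · exact Multiset.filter_eq_nil.2 fun b hb => (Multiset.eq_of_mem_replicate hb) ▸ h

lemma seqSums_ne_univ_of_not_mem {S : Multiset G} {w : G} (hw : w ∉ seqSums S) :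
    seqSums S ≠ Set.univ := fun h => hw (h.symm ▸ Set.mem_univ w)

lemma seqSums_map {G' : Type*} [AddCommGroup G'] (f : G ≃+ G')
    (S : Multiset G) : seqSums (S.map ⇑f) = ⇑f '' seqSums S := by
  ext x
  constructor
  · rintro ⟨T, hle, hne, rfl⟩
    refine ⟨(T.map ⇑f.symm).sum, ⟨T.map ⇑f.symm, ?_, by simpa using hne, rfl⟩, ?_⟩
    · have := Multiset.map_le_map (f := ⇑f.symm) hle
      simpa [Multiset.map_map, Function.comp] using this
    · rw [map_multiset_sum, Multiset.map_map]
      simp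
  · rintro ⟨y, ⟨T, hle, hne, rfl⟩, rfl⟩
    exact ⟨T.map ⇑f, Multiset.map_le_map hle, by simpa using hne, (map_multiset_sum f _).symm⟩

lemma seqSums_map_ne_univ {G' : Type*} [AddCommGroup G'] (f : G ≃+ G')
    {S : Multiset G} (h : seqSums S ≠ Set.univ) : seqSums (S.map ⇑f) ≠ Set.univ := by
  rw [seqSums_map]
  intro hc
  apply h
  have : ⇑f '' seqSums S = ⇑f '' Set.univ := by
    rw [hc, Set.image_univ, Set.range_eq_univ.2 f.surjective]
  exact Set.image_injective.2 f.injective this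

lemma isRegular_map {G' : Type*} [AddCommGroup G'] (f : G ≃+ G')
    {S : Multiset G} (h : IsRegularSeq S) : IsRegularSeq (S.map ⇑f) := by
  classical
  intro K hK
  have hcomap : AddSubgroup.comap f.toAddMonoidHom K ≠ ⊤ := by
    intro hc
    apply hK
    rw [eq_top_iff]
    intro x _
    have hx : f.symm x ∈ AddSubgroup.comap f.toAddMonoidHom K := hc ▸ AddSubgroup.mem_top _
    simpa using hx
  have hcard : Nat.card {x : G // f x ∈ K} = Nat.card K :=
    Nat.card_congr (f.toEquiv.subtypeEquiv (fun x => Iff.rfl))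
  rw [← Multiset.countP_eq_card_filter, Multiset.countP_map]
  have := h _ hcomap
  simpa [AddSubgroup.mem_comap, hcard, Function.comp] using this

lemma card_le_of_zmod_inj [Finite G] {K : AddSubgroup G} {n : ℕ}
    (f : ZMod n → G) (hmem : ∀ j, f j ∈ K) (hinj : Function.Injective f) :
    n ≤ Nat.card K := by
  have h2 : Nat.card (ZMod n) ≤ Nat.card K :=
    Nat.card_le_card_of_injective (fun j => (⟨f j, hmem j⟩ : K))
      (fun a b hab => hinj (congrArg Subtype.val hab))
  simpa [Nat.card_zmod] using h2

end Helpers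

section Prod

variable {p n : ℕ}

lemma zmod_pair_eq_smul [NeZero p] [NeZero n] (z : ZMod p × ZMod n) :
    z = z.1.val • ((1 : ZMod p), (0 : ZMod n)) + z.2.val • ((0 : ZMod p), (1 : ZMod n)) := by
  have h1 : z.1.val • ((1 : ZMod p), (0 : ZMod n)) = ((z.1 : ZMod p), (0 : ZMod n)) := by
    show ((z.1.val • (1 : ZMod p), z.1.val • (0 : ZMod n)) : ZMod p × ZMod n) = _
    simp [nsmul_eq_mul, ZMod.natCast_val, ZMod.cast_id]
  have h2 : z.2.val • ((0 : ZMod p), (1 : ZMod n)) = ((0 : ZMod p), (z.2 : ZMod n)) := by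
    show ((z.2.val • (0 : ZMod p), z.2.val • (1 : ZMod n)) : ZMod p × ZMod n) = _
    simp [nsmul_eq_mul, ZMod.natCast_val, ZMod.cast_id]
  rw [h1, h2]
  exact Prod.ext (by simp) (by simp)

lemma top_of_e1_e2_mem [NeZero p] [NeZero n] {K : AddSubgroup (ZMod p × ZMod n)}
    (h1 : ((1 : ZMod p), (0 : ZMod n)) ∈ K) (h2 : ((0 : ZMod p), (1 : ZMod n)) ∈ K) :
    K = ⊤ := by
  rw [eq_top_iff]
  intro z _
  rw [zmod_pair_eq_smul z]
  exact K.add_mem (K.nsmul_mem h1 _) (K.nsmul_mem h2 _)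

lemma smul_e2 [NeZero n] (j : ℕ) :
    j • (((0 : ZMod p), (1 : ZMod n))) = ((0 : ZMod p), (j : ZMod n)) := by
  show ((j • (0 : ZMod p), j • (1 : ZMod n)) : ZMod p × ZMod n) = _
  simp [nsmul_eq_mul]

lemma smul_e1 [NeZero p] (j : ℕ) :
    j • (((1 : ZMod p), (0 : ZMod n))) = ((j : ZMod p), (0 : ZMod n)) := by
  show ((j • (1 : ZMod p), j • (0 : ZMod n)) : ZMod p × ZMod n) = _
  simp [nsmul_eq_mul]

lemma smul_x (j : ℕ) :
    j • (((1 : ZMod p), (1 : ZMod n))) = ((j : ZMod p), (j : ZMod n)) := by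
  show ((j • (1 : ZMod p), j • (1 : ZMod n)) : ZMod p × ZMod n) = _
  simp [nsmul_eq_mul]

end Prod

section Branch2

open Multiset

lemma branch_pp (p : ℕ) (hp : p.Prime) :
    ∃ S : Multiset (ZMod p × ZMod p), IsRegularSeq S ∧
      Multiset.card S = 2 * p - 2 ∧ seqSums S ≠ Set.univ := by
  classical
  haveI : NeZero p := ⟨hp.pos.ne'⟩
  set e1 : ZMod p × ZMod p := ((1 : ZMod p), (0 : ZMod p)) with he1
  set e2 : ZMod p × ZMod p := ((0 : ZMod p), (1 : ZMod p)) with he2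
  refine ⟨replicate (p - 1) e1 + replicate (p - 1) e2, ?_, ?_, ?_⟩
  · -- regular
    intro K hK
    have hcount : Multiset.card ((replicate (p - 1) e1 + replicate (p - 1) e2).filter
        (fun g => g ∈ K)) =
        (if e1 ∈ K then p - 1 else 0) + (if e2 ∈ K then p - 1 else 0) := by
      rw [Multiset.filter_add, Multiset.card_add, filter_replicate', filter_replicate']
      split_ifs <;> simp
    rw [hcount]
    by_cases h1 : e1 ∈ K <;> by_cases h2 : e2 ∈ K
    · exact absurd (top_of_e1_e2_mem h1 h2) hK
    · have hcK : p ≤ Nat.card K := by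
        refine card_le_of_zmod_inj (fun j => ((j : ZMod p), (0 : ZMod p))) (fun j => ?_) ?_
        · have := K.nsmul_mem h1 j.val
          rwa [smul_e1, ZMod.natCast_val, ZMod.cast_id] at this
        · intro a b hab
          simpa [Prod.ext_iff] using hab
      simp only [if_pos h1, if_neg h2]
      omega
    · have hcK : p ≤ Nat.card K := by
        refine card_le_of_zmod_inj (fun j => ((0 : ZMod p), (j : ZMod p))) (fun j => ?_) ?_
        · have := K.nsmul_mem h2 j.val
          rwa [smul_e2, ZMod.natCast_val, ZMod.cast_id] at this
        · intro a b hab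
          simpa [Prod.ext_iff] using hab
      simp only [if_neg h1, if_pos h2]
      omega
    · simp [h1, h2]
  · simp
    omega
  · refine seqSums_ne_univ_of_not_mem (w := 0) ?_
    rintro ⟨T, hle, hne, hsum⟩
    obtain ⟨a, b, ha, hb, rfl⟩ := le_two_replicate hle
    rw [Multiset.sum_add, Multiset.sum_replicate, Multiset.sum_replicate,
      smul_e1, smul_e2] at hsum
    have hfst : ((a : ZMod p)) = 0 := by
      have := congrArg Prod.fst hsum
      simpa using this
    have hsnd : ((b : ZMod p)) = 0 := by
      have := congrArg Prod.snd hsum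
      simpa using this
    have hp2 := hp.two_le
    have ha0 : a = 0 :=
      Nat.eq_zero_of_dvd_of_lt ((ZMod.natCast_eq_zero_iff a p).1 hfst) (by omega)
    have hb0 : b = 0 :=
      Nat.eq_zero_of_dvd_of_lt ((ZMod.natCast_eq_zero_iff b p).1 hsnd) (by omega)
    subst ha0 hb0
    simp at hne
end Branch2

section Branch3

open Multiset

lemma branch_ppk (p n : ℕ) (hp : p.Prime) (hn : 2 * p ≤ n) :
    ∃ S : Multiset (ZMod p × ZMod n), IsRegularSeq S ∧
      Multiset.card S = n + 2 * p - 4 ∧ seqSums S ≠ Set.univ := by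
  classical
  haveI : NeZero p := ⟨hp.pos.ne'⟩
  have hp2 := hp.two_le
  have hn0 : n ≠ 0 := by omega
  haveI : NeZero n := ⟨hn0⟩
  set e2 : ZMod p × ZMod n := ((0 : ZMod p), (1 : ZMod n)) with he2
  set x : ZMod p × ZMod n := ((1 : ZMod p), (1 : ZMod n)) with hx
  refine ⟨replicate (n - 2) e2 + replicate (2 * p - 2) x, ?_, ?_, ?_⟩
  · -- regular
    intro K hK
    have hcount : Multiset.card ((replicate (n - 2) e2 + replicate (2 * p - 2) x).filter
        (fun g => g ∈ K)) =
        (if e2 ∈ K then n - 2 else 0) + (if x ∈ K then 2 * p - 2 else 0) := by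
      rw [Multiset.filter_add, Multiset.card_add, filter_replicate', filter_replicate']
      split_ifs <;> simp
    rw [hcount]
    have hKe2 : e2 ∈ K → n ≤ Nat.card K := by
      intro h2
      refine card_le_of_zmod_inj (fun j => ((0 : ZMod p), (j : ZMod n))) (fun j => ?_) ?_
      · have := K.nsmul_mem h2 j.val
        rwa [smul_e2, ZMod.natCast_val, ZMod.cast_id] at this
      · intro a b hab
        simpa [Prod.ext_iff] using hab
    have hKx : x ∈ K → n ≤ Nat.card K := by
      intro h2
      refine card_le_of_zmod_inj (fun j => ((j.val : ZMod p), (j : ZMod n))) (fun j => ?_) ?_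
      · have hv : ((j.val : ZMod n)) = j := by rw [ZMod.natCast_val, ZMod.cast_id]
        have := K.nsmul_mem h2 j.val
        rw [smul_x, hv] at this
        exact this
      · intro a b hab
        rw [Prod.ext_iff] at hab
        exact hab.2
    by_cases h1 : e2 ∈ K <;> by_cases h2 : x ∈ K
    · refine absurd (top_of_e1_e2_mem ?_ h1) hK
      have := K.sub_mem h2 h1
      have hsub : x - e2 = ((1 : ZMod p), (0 : ZMod n)) := by
        rw [hx, he2]
        exact Prod.ext (by simp) (by simp)
      rwa [hsub] at this
    · have := hKe2 h1
      simp only [if_pos h1, if_neg h2]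
      omega
    · have := hKx h2
      simp only [if_neg h1, if_pos h2]
      omega
    · simp [h1, h2]
  · simp
    omega
  · set w : ZMod p × ZMod n := (((p - 1 : ℕ) : ZMod p), ((p - 2 : ℕ) : ZMod n)) with hw
    refine seqSums_ne_univ_of_not_mem (w := w) ?_
    rintro ⟨T, hle, hne, hsum⟩
    obtain ⟨a, b, ha, hb, rfl⟩ := le_two_replicate hle
    rw [Multiset.sum_add, Multiset.sum_replicate, Multiset.sum_replicate,
      smul_e2, smul_x] at hsum
    rw [Prod.ext_iff] at hsum
    obtain ⟨hfst, hsnd⟩ := hsum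
    simp only [Prod.fst_add, Prod.snd_add] at hfst hsnd
    -- hfst : 0 + (b : ZMod p) = ((p-1 : ℕ) : ZMod p)
    have hb1 : ((b + 1 : ℕ) : ZMod p) = 0 := by
      push_cast
      rw [zero_add] at hfst
      rw [hfst]
      have : ((p - 1 : ℕ) : ZMod p) + 1 = ((p - 1 + 1 : ℕ) : ZMod p) := by push_cast; ring
      rw [this, Nat.sub_add_cancel (by omega), ZMod.natCast_self]
    have hpb : p ∣ b + 1 := (ZMod.natCast_eq_zero_iff _ _).1 hb1
    obtain ⟨c, hc⟩ := hpb
    have hc1 : c = 1 := by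
      rcases Nat.lt_or_ge c 2 with h | h
      · interval_cases c <;> omega
      · exfalso
        have h2c : p * 2 ≤ p * c := Nat.mul_le_mul_left p h
        omega
    subst hc1
    have hbval : b = p - 1 := by omega
    subst hbval
    -- hsnd : (a : ZMod n) + (p - 1 : ℕ) = ((p - 2 : ℕ) : ZMod n)
    have hsnd' : ((a + (p - 1) : ℕ) : ZMod n) = ((p - 2 : ℕ) : ZMod n) := by
      push_cast
      simpa using hsnd
    have hmod : (p - 2) % n = (a + (p - 1)) % n := ((ZMod.natCast_eq_natCast_iff _ _ _).1 hsnd').symm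
    have hdvd : n ∣ (a + (p - 1)) - (p - 2) := (Nat.modEq_iff_dvd' (by omega)).1 hmod
    have : a + (p - 1) - (p - 2) = a + 1 := by omega
    rw [this] at hdvd
    have := Nat.le_of_dvd (by omega) hdvd
    omega
end Branch3

section Cyclic

open Multiset

lemma branch_cyclic (G : Type*) [AddCommGroup G] [Finite G] (hG : IsAddCyclic G)
    (h1 : 1 < Nat.card G) :
    ∃ S : Multiset G, IsRegularSeq S ∧ Multiset.card S = Nat.card G - 1 ∧
      seqSums S ≠ Set.univ := by
  classical
  obtain ⟨g, hg⟩ := hG.exists_generator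
  have htop : AddSubgroup.zmultiples g = ⊤ := by
    rw [eq_top_iff]
    intro x _
    exact hg x
  have horder : addOrderOf g = Nat.card G := by
    rw [← Nat.card_zmultiples, htop]
    exact Nat.card_congr (AddSubgroup.topEquiv.toEquiv)
  refine ⟨replicate (Nat.card G - 1) g, ?_, by simp, ?_⟩
  · intro K hK
    have hgK : g ∉ K := by
      intro hgK
      apply hK
      rw [eq_top_iff, ← htop]
      rwa [AddSubgroup.zmultiples_le]
    rw [filter_replicate', if_neg hgK]
    simp
  · refine seqSums_ne_univ_of_not_mem (w := 0) ?_
    rintro ⟨T, hle, hne, hsum⟩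
    obtain ⟨k, hk, rfl⟩ := le_replicate_iff'.1 hle
    have hk0 : k ≠ 0 := by
      intro h
      subst h
      simp at hne
    rw [Multiset.sum_replicate] at hsum
    have hdvd : addOrderOf g ∣ k := addOrderOf_dvd_of_nsmul_eq_zero hsum
    rw [horder] at hdvd
    have := Nat.le_of_dvd (Nat.pos_of_ne_zero hk0) hdvd
    omega
end Cyclic

section General

open Multiset

lemma exists_hom_zmod (G : Type*) [AddCommGroup G] [Finite G] (p : ℕ) (hp : p.Prime)
    (hdvd : p ∣ Nat.card G) : ∃ φ : G →+ ZMod p, ∃ g : G, φ g = 1 := by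
  classical
  obtain ⟨ι, hι, n, hn, ⟨e⟩⟩ := AddCommGroup.equiv_directSum_zmod_of_finite' G
  have hcard : Nat.card G = ∏ i, n i := by
    rw [Nat.card_congr (e.toEquiv.trans (DFinsupp.equivFunOnFintype)), Nat.card_pi]
    simp [Nat.card_zmod]
  have hex : ∃ i, p ∣ n i := by
    rw [hcard] at hdvd
    obtain ⟨i, _, hi⟩ := (hp.prime.dvd_finset_prod_iff _).1 hdvd
    exact ⟨i, hi⟩
  obtain ⟨i, hpi⟩ := hex
  haveI : NeZero (n i) := ⟨by have := hn i; omega⟩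
  refine ⟨((ZMod.castHom hpi (ZMod p)).toAddMonoidHom.comp
    (DFinsupp.evalAddMonoidHom i)).comp e.toAddMonoidHom,
    e.symm (DirectSum.of (fun j => ZMod (n j)) i 1), ?_⟩
  simp only [AddMonoidHom.coe_comp, Function.comp_apply, AddEquiv.coe_toAddMonoidHom,
    AddEquiv.apply_symm_apply]
  show (ZMod.castHom hpi (ZMod p)) (((DirectSum.of (fun j => ZMod (n j)) i) 1) i) = 1
  rw [DirectSum.of_eq_same, map_one]

lemma branch_general (G : Type*) [AddCommGroup G] [Finite G] (h1 : 1 < Nat.card G) :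
    ∃ S : Multiset G, IsRegularSeq S ∧
      Multiset.card S = Nat.card G / (Nat.card G).minFac + (Nat.card G).minFac - 3 ∧
      seqSums S ≠ Set.univ := by
  classical
  haveI := Fintype.ofFinite G
  obtain ⟨p, hpdef⟩ : ∃ p, p = (Nat.card G).minFac := ⟨_, rfl⟩
  rw [← hpdef]
  have hp : p.Prime := hpdef ▸ Nat.minFac_prime h1.ne'
  have hp2 := hp.two_le
  haveI : Fact p.Prime := ⟨hp⟩
  obtain ⟨φ, g, hg⟩ := exists_hom_zmod G p hp (hpdef ▸ Nat.minFac_dvd _)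
  set H : AddSubgroup G := φ.ker with hHdef
  -- key cardinality fact
  have key : ∀ K : AddSubgroup G, g ∈ K →
      Nat.card K = p * Nat.card (H ⊓ K : AddSubgroup G) := by
    intro K hgK
    set ψ : K →+ ZMod p := φ.comp K.subtype with hψ
    have hψsurj : Function.Surjective ψ := by
      intro z
      refine ⟨z.val • ⟨g, hgK⟩, ?_⟩
      have h2 : ψ (z.val • (⟨g, hgK⟩ : K)) = z.val • φ g := by
        rw [_root_.map_nsmul]
        rfl
      rw [h2, hg, Nat.smul_one_eq_cast, ZMod.natCast_val, ZMod.cast_id]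
    have hc1 : Nat.card K = Nat.card (K ⧸ ψ.ker) * Nat.card ψ.ker :=
      AddSubgroup.card_eq_card_quotient_mul_card_addSubgroup _
    have hc2 : Nat.card (K ⧸ ψ.ker) = p := by
      rw [Nat.card_congr (QuotientAddGroup.quotientKerEquivOfSurjective ψ hψsurj).toEquiv]
      simp [Nat.card_zmod]
    have hc3 : Nat.card ψ.ker = Nat.card (H ⊓ K : AddSubgroup G) := by
      refine Nat.card_congr ⟨fun x => ⟨x.1.1, AddSubgroup.mem_inf.2 ⟨x.2, x.1.2⟩⟩,
        fun y => ⟨⟨y.1, (AddSubgroup.mem_inf.1 y.2).2⟩, (AddSubgroup.mem_inf.1 y.2).1⟩,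
        fun x => rfl, fun y => rfl⟩
    rw [hc1, hc2, hc3]
  -- g ∉ H
  have hgH : g ∉ H := by
    intro hgH
    have : φ g = 0 := hgH
    rw [hg] at this
    exact one_ne_zero this
  -- card of filtered finsets
  have cardA : ∀ A : AddSubgroup G,
      (Finset.univ.filter (fun x => x ∈ A ∧ x ≠ 0)).card = Nat.card A - 1 := by
    intro A
    have heq : (Finset.univ.filter (fun x => x ∈ A ∧ x ≠ 0)) =
        (Finset.univ.filter (fun x => x ∈ A)).erase 0 := by
      ext x
      simp [Finset.mem_erase, and_comm]
    rw [heq, Finset.card_erase_of_mem (by simp [A.zero_mem]), ← Fintype.card_subtype,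
      ← Nat.card_eq_fintype_card]
  set SH : Finset G := Finset.univ.filter (fun x => x ∈ H ∧ x ≠ 0) with hSH
  have hcardG : Nat.card G = p * Nat.card H := by
    have := key ⊤ (AddSubgroup.mem_top g)
    rw [inf_top_eq] at this
    rw [← this]
    exact (Nat.card_congr AddSubgroup.topEquiv.toEquiv).symm
  have hHpos : 1 ≤ Nat.card H := Nat.one_le_iff_ne_zero.2 (Nat.card_pos).ne'
  refine ⟨SH.val + replicate (p - 2) g, ?_, ?_, ?_⟩
  · -- regularity
    intro K hK
    have hfilter : Multiset.card ((SH.val + replicate (p - 2) g).filter (fun x => x ∈ K)) =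
        (Nat.card (H ⊓ K : AddSubgroup G) - 1) + (if g ∈ K then p - 2 else 0) := by
      rw [Multiset.filter_add, Multiset.card_add, filter_replicate']
      congr 1
      · rw [← Finset.filter_val, ← Finset.card_def]
        have heq2 : SH.filter (fun x => x ∈ K) =
            Finset.univ.filter (fun x => x ∈ (H ⊓ K : AddSubgroup G) ∧ x ≠ 0) := by
          ext x
          simp only [hSH, Finset.mem_filter, Finset.mem_univ, true_and,
            AddSubgroup.mem_inf]
          tauto
        rw [heq2]
        exact cardA _
      · split_ifs <;> simp
    rw [hfilter]
    by_cases hgK : g ∈ K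
    · rw [if_pos hgK]
      have hcK := key K hgK
      have hmpos : 1 ≤ Nat.card (H ⊓ K : AddSubgroup G) :=
        Nat.one_le_iff_ne_zero.2 (Nat.card_pos).ne'
      have hb : p - 1 ≤ (p - 1) * Nat.card (H ⊓ K : AddSubgroup G) :=
        Nat.le_mul_of_pos_right _ hmpos
      have hle2 : Nat.card (H ⊓ K : AddSubgroup G) ≤ p * Nat.card (H ⊓ K : AddSubgroup G) :=
        Nat.le_mul_of_pos_left _ hp.pos
      have hid : p * Nat.card (H ⊓ K : AddSubgroup G) =
          Nat.card (H ⊓ K : AddSubgroup G) + (p - 1) * Nat.card (H ⊓ K : AddSubgroup G) := by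
        rw [Nat.sub_mul, one_mul]
        omega
      omega
    · rw [if_neg hgK]
      have hle : Nat.card (H ⊓ K : AddSubgroup G) ≤ Nat.card K :=
        AddSubgroup.card_le_of_le inf_le_right
      omega
  · -- length
    rw [Multiset.card_add, Multiset.card_replicate]
    have cardSH : Multiset.card SH.val = Nat.card H - 1 := by
      rw [hSH, ← Finset.card_def]
      convert cardA H using 2
      refine Finset.ext fun x => ?_
      simp only [Finset.mem_filter]
    have hdiv : Nat.card G / p = Nat.card H := by
      rw [hcardG, Nat.mul_div_cancel_left _ hp.pos]
    rw [cardSH, hdiv]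
    omega
  · -- not a basis
    refine seqSums_ne_univ_of_not_mem (w := (p - 1) • g) ?_
    rintro ⟨T, hle, hne, hsum⟩
    obtain ⟨T₁, T₂, hT1, hT2, rfl⟩ := split_le_add hle
    obtain ⟨j, hj, rfl⟩ := le_replicate_iff'.1 hT2
    have hT1H : T₁.sum ∈ H := by
      refine AddSubgroup.multiset_sum_mem H T₁ (fun a ha => ?_)
      have : a ∈ SH := cast Finset.mem_val (Multiset.mem_of_le hT1 ha)
      rw [hSH, Finset.mem_filter] at this
      exact this.2.1
    have happ := congrArg φ hsum
    rw [Multiset.sum_add, _root_.map_add, Multiset.sum_replicate, _root_.map_nsmul,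
      _root_.map_nsmul, hg, Nat.smul_one_eq_cast, Nat.smul_one_eq_cast] at happ
    have hT1z : φ T₁.sum = 0 := by rwa [hHdef, AddMonoidHom.mem_ker] at hT1H
    rw [hT1z, zero_add] at happ
    -- happ : (j : ZMod p) = ((p-1 : ℕ) : ZMod p)
    have hmod := (ZMod.natCast_eq_natCast_iff _ _ _).1 happ
    have hjlt : j % p = j := Nat.mod_eq_of_lt (by omega)
    have hplt : (p - 1) % p = p - 1 := Nat.mod_eq_of_lt (by omega)
    rw [Nat.ModEq, hjlt, hplt] at hmod
    omega

end General



open Classical in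
/-- The invariant `m(G)`: `|G|` if `G` is cyclic, `2p - 1` if `G ≅ C_p ⊕ C_p`,
`kp + 2p - 3 = |G|/p + 2p - 3` if `G ≅ C_p ⊕ C_{pk}` with `k ≥ 2`, and
`|G|/p + p - 2` otherwise, where `p` is the smallest prime dividing `|G|`. -/
noncomputable def mInvariant (G : Type*) [AddCommGroup G] : ℕ :=
  if IsAddCyclic G then Nat.card G
  else if Nonempty (G ≃+ (ZMod (Nat.card G).minFac × ZMod (Nat.card G).minFac)) then
    2 * (Nat.card G).minFac - 1
  else if ∃ k : ℕ, 2 ≤ k ∧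
      Nonempty (G ≃+ (ZMod (Nat.card G).minFac × ZMod ((Nat.card G).minFac * k))) then
    Nat.card G / (Nat.card G).minFac + 2 * (Nat.card G).minFac - 3
  else Nat.card G / (Nat.card G).minFac + (Nat.card G).minFac - 2

/-- For every finite abelian group `G` with `|G| > 1`, `c₀(G) ≥ m(G)`:
there is a regular sequence over `G` of length `m(G) - 1` that is not an additive basis. -/
theorem c0_ge_m (G : Type*) [AddCommGroup G] [Finite G] (h1 : 1 < Nat.card G) :
    ∃ S : Multiset G, IsRegularSeq S ∧ Multiset.card S = mInvariant G - 1 ∧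
      seqSums S ≠ Set.univ := by
  classical
  have hp : (Nat.card G).minFac.Prime := Nat.minFac_prime h1.ne'
  have hp2 := hp.two_le
  by_cases hcyc : IsAddCyclic G
  · have hm : mInvariant G = Nat.card G := by
      unfold mInvariant
      rw [if_pos hcyc]
    rw [hm]
    exact branch_cyclic G hcyc h1
  · by_cases hq : Nonempty (G ≃+ (ZMod (Nat.card G).minFac × ZMod (Nat.card G).minFac))
    · obtain ⟨e⟩ := hq
      have hm : mInvariant G = 2 * (Nat.card G).minFac - 1 := by
        unfold mInvariant
        rw [if_neg hcyc, if_pos ⟨e⟩]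
      rw [hm]
      obtain ⟨S, hreg, hcard, hne⟩ := branch_pp (Nat.card G).minFac hp
      refine ⟨S.map ⇑e.symm, isRegular_map e.symm hreg, ?_, seqSums_map_ne_univ e.symm hne⟩
      rw [Multiset.card_map, hcard]
      omega
    · by_cases hr : ∃ k : ℕ, 2 ≤ k ∧
          Nonempty (G ≃+ (ZMod (Nat.card G).minFac × ZMod ((Nat.card G).minFac * k)))
      · obtain ⟨k, hk, ⟨e⟩⟩ := hr
        have hm : mInvariant G =
            Nat.card G / (Nat.card G).minFac + 2 * (Nat.card G).minFac - 3 := by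
          unfold mInvariant
          rw [if_neg hcyc, if_neg hq, if_pos ⟨k, hk, ⟨e⟩⟩]
        rw [hm]
        have h2p : 2 * (Nat.card G).minFac ≤ (Nat.card G).minFac * k := by
          have := Nat.mul_le_mul_left (Nat.card G).minFac hk
          omega
        obtain ⟨S, hreg, hcard, hne⟩ :=
          branch_ppk (Nat.card G).minFac ((Nat.card G).minFac * k) hp h2p
        refine ⟨S.map ⇑e.symm, isRegular_map e.symm hreg, ?_, seqSums_map_ne_univ e.symm hne⟩
        rw [Multiset.card_map, hcard]
        have hcardG : Nat.card G = (Nat.card G).minFac * ((Nat.card G).minFac * k) := by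
          have h0 : Nat.card (ZMod (Nat.card G).minFac × ZMod ((Nat.card G).minFac * k)) =
              (Nat.card G).minFac * ((Nat.card G).minFac * k) := by
            rw [Nat.card_prod, Nat.card_zmod, Nat.card_zmod]
          rw [← h0]
          exact Nat.card_congr e.toEquiv
        have hdiv : Nat.card G / (Nat.card G).minFac = (Nat.card G).minFac * k := by
          have h2 := Nat.mul_div_cancel_left ((Nat.card G).minFac * k) hp.pos
          rw [← hcardG] at h2
          exact h2
        rw [hdiv]
        omega
      · have hm : mInvariant G =
            Nat.card G / (Nat.card G).minFac + (Nat.card G).minFac - 2 := by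
          unfold mInvariant
          rw [if_neg hcyc, if_neg hq, if_neg hr]
        rw [hm]
        obtain ⟨S, hreg, hcard, hne⟩ := branch_general G h1
        refine ⟨S, hreg, ?_, hne⟩
        rw [hcard]
        have hdpos : 1 ≤ Nat.card G / (Nat.card G).minFac :=
          (Nat.one_le_div_iff hp.pos).2 (Nat.minFac_le (by omega))
        omega
end

section
/- Let G be a finite abelian group, p the smallest prime dividing |G|, and S a regular sequence over G of length |S| ≥ max{|G|/p + p − 2, D(G)}. If Σ(S) ≠ G, then for every nonempty subsequence T of S, the stabilizer st(Σ₀(T)) = {0}. -/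
/-! ### Auxiliary lemmas -/

section Aux

set_option linter.unusedSectionVars false

variable {G : Type*} [AddCommGroup G]

lemma seqSums0_eq (S : Multiset G) :
    seqSums0 S = {x | ∃ T : Multiset G, T ≤ S ∧ T.sum = x} := by
  ext x
  constructor
  · rintro (⟨T, hT, _, rfl⟩ | rfl)
    · exact ⟨T, hT, rfl⟩
    · exact ⟨0, zero_le, rfl⟩
  · rintro ⟨T, hT, rfl⟩
    by_cases h : T = 0
    · subst h; right; simp
    · left; exact ⟨T, hT, h, rfl⟩

lemma zero_mem_seqSums0 (S : Multiset G) : (0 : G) ∈ seqSums0 S := by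
  rw [seqSums0_eq]; exact ⟨0, zero_le, rfl⟩

lemma inter_add_sub_eq [DecidableEq G] {U A : Multiset G} : (U ∩ A) + (U - A) = U := by
  ext a
  simp only [Multiset.count_add, Multiset.count_inter, Multiset.count_sub]
  omega

open Pointwise in
lemma seqSums0_add (A B : Multiset G) :
    seqSums0 (A + B) = seqSums0 A + seqSums0 B := by
  classical
  rw [seqSums0_eq, seqSums0_eq, seqSums0_eq]
  ext x
  constructor
  · rintro ⟨U, hU, rfl⟩
    have h1 : U ∩ A ≤ A := Multiset.inter_le_right
    have h2 : U - A ≤ B := by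
      rw [Multiset.sub_le_iff_le_add]
      calc U ≤ A + B := hU
      _ = B + A := add_comm _ _
    have m1 : (U ∩ A).sum ∈ {x | ∃ T : Multiset G, T ≤ A ∧ T.sum = x} := ⟨U ∩ A, h1, rfl⟩
    have m2 : (U - A).sum ∈ {x | ∃ T : Multiset G, T ≤ B ∧ T.sum = x} := ⟨U - A, h2, rfl⟩
    have := Set.add_mem_add m1 m2
    rwa [← Multiset.sum_add, inter_add_sub_eq] at this
  · rintro ⟨a, ⟨U, hU, rfl⟩, b, ⟨V, hV, rfl⟩, rfl⟩
    exact ⟨U + V, add_le_add hU hV, Multiset.sum_add U V⟩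

open Pointwise in
lemma seqSums0_decomp [DecidableEq G] {T S : Multiset G} (hT : T ≤ S) :
    seqSums0 S = seqSums0 T + seqSums0 (S - T) := by
  conv_lhs => rw [← add_tsub_cancel_of_le hT]
  exact seqSums0_add T (S - T)

open Pointwise in
lemma stab_add_right {g : G} {A : Set G} (h : (fun x => g + x) '' A = A) (C : Set G) :
    (fun x => g + x) '' (A + C) = A + C := by
  have key : (fun x => g + x) '' (A + C) = ((fun x => g + x) '' A) + C := by
    ext x
    simp only [Set.mem_image, Set.mem_add]
    constructor
    · rintro ⟨y, ⟨a, ha, c, hc, rfl⟩, rfl⟩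
      exact ⟨g + a, ⟨a, ha, rfl⟩, c, hc, add_assoc _ _ _⟩
    · rintro ⟨a', ⟨a, ha, rfl⟩, c, hc, rfl⟩
      exact ⟨a + c, ⟨a, ha, c, hc, rfl⟩, (add_assoc _ _ _).symm⟩
  rw [key, h]

/-- The stabilizer of a set of group elements, as a subgroup. -/
def stabSubgroup (A : Set G) : AddSubgroup G where
  carrier := {g | (fun x => g + x) '' A = A}
  zero_mem' := by simp
  add_mem' := by
    intro a b ha hb
    show (fun x => a + b + x) '' A = A
    have : (fun x : G => a + b + x) = (fun x => a + x) ∘ (fun x => b + x) := by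
      funext x; exact add_assoc _ _ _
    rw [this, Set.image_comp, hb, ha]
  neg_mem' := by
    intro a ha
    show (fun x => -a + x) '' A = A
    conv_lhs => rw [← ha]
    rw [← Set.image_comp]
    have : ((fun x : G => -a + x) ∘ fun x => a + x) = id := by
      funext x; simp
    rw [this, Set.image_id]

lemma mem_stabSubgroup {A : Set G} {g : G} :
    g ∈ stabSubgroup A ↔ (fun x => g + x) '' A = A := Iff.rfl

lemma neg_stab {A : Set G} {g : G} (h : (fun x => g + x) '' A = A) :
    (fun x => -g + x) '' A = A := by
  conv_lhs => rw [← h]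
  rw [← Set.image_comp]
  have : ((fun x : G => -g + x) ∘ fun x => g + x) = id := by funext x; simp
  rw [this, Set.image_id]

lemma stab_of_subsets {A : Set G} {g : G}
    (h1 : (fun x => g + x) '' A ⊆ A) (h2 : (fun x => -g + x) '' A ⊆ A) :
    (fun x => g + x) '' A = A := by
  refine h1.antisymm fun x hx => ?_
  have : -g + x ∈ A := h2 ⟨x, hx, rfl⟩
  exact ⟨-g + x, this, by simp⟩

lemma exists_zerosum [Finite G] (S : Multiset G) (h : Nat.card G ≤ Multiset.card S) :
    ∃ T : Multiset G, T ≤ S ∧ T ≠ 0 ∧ T.sum = 0 := by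
  classical
  obtain ⟨l, rfl⟩ : ∃ l : List G, (l : Multiset G) = S := ⟨S.toList, S.coe_toList⟩
  have := Fintype.ofFinite G
  have hl : Fintype.card G ≤ l.length := by
    rw [← Nat.card_eq_fintype_card]
    simpa using h
  obtain ⟨i, j, hij, he⟩ := Fintype.exists_ne_map_eq_of_card_lt
    (fun i : Fin (l.length + 1) => (l.take i).sum) (by simp; omega)
  have key : ∀ i j : Fin (l.length + 1), i < j →
      (l.take i).sum = (l.take j).sum →
      ∃ T : Multiset G, T ≤ (l : Multiset G) ∧ T ≠ 0 ∧ T.sum = 0 := by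
    clear hij he i j
    intro i j hlt he
    set k := (j : ℕ) - (i : ℕ) with hk
    refine ⟨((l.drop i).take k : List G), ?_, ?_, ?_⟩
    · exact Multiset.coe_le.mpr (((l.drop i).take_sublist k).trans (l.drop_sublist i)).subperm
    · rw [Ne, Multiset.coe_eq_zero]
      intro h0
      have := congrArg List.length h0
      simp only [List.length_take, List.length_drop, List.length_nil] at this
      have hj : (j : ℕ) ≤ l.length := Nat.lt_succ_iff.mp j.isLt
      omega
    · have htake : l.take j = l.take i ++ (l.drop i).take k := by
        have : (j : ℕ) = (i : ℕ) + k := by omega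
        rw [this, List.take_add]
      have : (l.take i).sum + ((l.drop i).take k).sum = (l.take i).sum + 0 := by
        rw [add_zero, ← List.sum_append, ← htake, he]
      have h2 := add_left_cancel this
      rw [Multiset.sum_coe, h2]
  rcases (Ne.lt_or_gt hij) with hlt | hlt
  · exact key i j hlt he
  · exact key j i hlt he.symm

lemma exists_preimage_le_map' {α β : Type*} (f : α → β) (S : Multiset α) :
    ∀ T : Multiset β, T ≤ S.map f → ∃ U : Multiset α, U ≤ S ∧ U.map f = T := by
  classical
  induction S using Multiset.induction_on with
  | empty =>
    intro T hT
    simp only [Multiset.map_zero, Multiset.le_zero] at hT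
    exact ⟨0, le_rfl, by simp [hT]⟩
  | cons a S ih =>
    intro T hT
    rw [Multiset.map_cons] at hT
    by_cases hfa : f a ∈ T
    · have h1 : T.erase (f a) ≤ S.map f := by
        have := Multiset.erase_le_erase (f a) hT
        rwa [Multiset.erase_cons_head] at this
      obtain ⟨U', hU', hmap⟩ := ih (T.erase (f a)) h1
      refine ⟨a ::ₘ U', Multiset.cons_le_cons a hU', ?_⟩
      rw [Multiset.map_cons, hmap, Multiset.cons_erase hfa]
    · have h1 : T ≤ S.map f := (Multiset.le_cons_of_notMem hfa).mp hT
      obtain ⟨U, hU, hmap⟩ := ih T h1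
      exact ⟨U, hU.trans (Multiset.le_cons_self S a), hmap⟩

lemma seqSums0_map {Q : Type*} [AddCommGroup Q] (ψ : G →+ Q) (S : Multiset G) :
    seqSums0 (S.map ψ) = ψ '' seqSums0 S := by
  rw [seqSums0_eq, seqSums0_eq]
  ext x
  constructor
  · rintro ⟨T', hT', rfl⟩
    obtain ⟨U, hU, rfl⟩ := exists_preimage_le_map' ψ S T' hT'
    exact ⟨U.sum, ⟨U, hU, rfl⟩, (map_multiset_sum ψ U)⟩
  · rintro ⟨y, ⟨T, hT, rfl⟩, rfl⟩
    exact ⟨T.map ψ, Multiset.map_le_map hT, (map_multiset_sum ψ T).symm⟩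

lemma seqSums0_cons (u : G) (U : Multiset G) :
    seqSums0 (u ::ₘ U) = seqSums0 U ∪ (fun x => u + x) '' seqSums0 U := by
  classical
  rw [seqSums0_eq, seqSums0_eq]
  ext x
  constructor
  · rintro ⟨T, hT, rfl⟩
    by_cases hu : u ∈ T
    · right
      have h1 : T.erase u ≤ U := by
        have := Multiset.erase_le_erase u hT
        rwa [Multiset.erase_cons_head] at this
      refine ⟨(T.erase u).sum, ⟨T.erase u, h1, rfl⟩, ?_⟩
      show u + (T.erase u).sum = T.sum
      rw [← Multiset.sum_cons, Multiset.cons_erase hu]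
    · left
      exact ⟨T, (Multiset.le_cons_of_notMem hu).mp hT, rfl⟩
  · rintro (⟨T, hT, rfl⟩ | ⟨y, ⟨T, hT, rfl⟩, rfl⟩)
    · exact ⟨T, hT.trans (Multiset.le_cons_self U u), rfl⟩
    · exact ⟨u ::ₘ T, Multiset.cons_le_cons u hT, Multiset.sum_cons u T⟩

lemma seqSums0_singleton (u : G) : seqSums0 ({u} : Multiset G) = {0, u} := by
  rw [seqSums0_eq]
  ext x
  simp only [Multiset.le_singleton, Set.mem_setOf_eq, Set.mem_insert_iff, Set.mem_singleton_iff]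
  constructor
  · rintro ⟨T, (rfl | rfl), rfl⟩
    · left; simp
    · right; simp
  · rintro (rfl | rfl)
    · exact ⟨0, Or.inl rfl, rfl⟩
    · refine ⟨(x ::ₘ 0 : Multiset G), ?_, by simp⟩
      right
      rfl

end Aux

open Pointwise in
lemma lemmaStar {Q : Type*} [AddCommGroup Q] [Finite Q] [DecidableEq Q] :
    ∀ U : Multiset Q,
      (∀ g : Q, (fun x => g + x) '' seqSums0 U = seqSums0 U → g = 0) →
      Multiset.card (U.filter (fun u => u ≠ 0)) + 1 ≤ (seqSums0 U).ncard := by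
  intro U
  induction U using Multiset.induction_on with
  | empty =>
    intro _
    have h0 : seqSums0 (0 : Multiset Q) = {0} := by
      rw [seqSums0_eq]
      ext x
      simp only [Multiset.le_zero, Set.mem_setOf_eq, Set.mem_singleton_iff]
      constructor
      · rintro ⟨T, rfl, rfl⟩; simp
      · rintro rfl; exact ⟨0, rfl, rfl⟩
    rw [h0]
    simp
  | cons u U ih =>
    intro hst
    have hE : seqSums0 (u ::ₘ U) = seqSums0 U ∪ (fun x => u + x) '' seqSums0 U :=
      seqSums0_cons u U
    have hcomm : seqSums0 (u ::ₘ U) = seqSums0 U + seqSums0 ({u} : Multiset Q) := by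
      rw [← seqSums0_add]
      congr 1
      rw [add_comm, Multiset.singleton_add]
    have hst' : ∀ g : Q, (fun x => g + x) '' seqSums0 U = seqSums0 U → g = 0 := by
      intro g hg
      apply hst
      rw [hcomm]
      exact stab_add_right hg _
    have hIH := ih hst'
    by_cases hu : u = 0
    · subst hu
      have h00 : (fun x : Q => 0 + x) '' seqSums0 U = seqSums0 U := by simp
      have hcard : Multiset.card (Multiset.filter (fun v => v ≠ 0) ((0 : Q) ::ₘ U))
          = Multiset.card (U.filter (fun v => v ≠ 0)) := by
        rw [Multiset.filter_cons]; simp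
      rw [hE, h00, Set.union_self, hcard]
      exact hIH
    · have himg : ¬ ((fun x => u + x) '' seqSums0 U ⊆ seqSums0 U) := by
        intro hsub
        apply hu
        apply hst' u
        apply Set.eq_of_subset_of_ncard_le hsub ?_ (Set.toFinite _)
        rw [Set.ncard_image_of_injective _ (add_right_injective u)]
      obtain ⟨b, hb1, hb2⟩ := Set.not_subset.mp himg
      have hins : insert b (seqSums0 U) ⊆ seqSums0 (u ::ₘ U) := by
        rw [hE]
        intro x hx
        rcases hx with rfl | hx
        · exact Or.inr hb1
        · exact Or.inl hx
      have h1 : (insert b (seqSums0 U)).ncard = (seqSums0 U).ncard + 1 :=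
        Set.ncard_insert_of_notMem hb2 (Set.toFinite _)
      have h2 : (insert b (seqSums0 U)).ncard ≤ (seqSums0 (u ::ₘ U)).ncard :=
        Set.ncard_le_ncard hins (Set.toFinite _)
      have hcard : Multiset.card (Multiset.filter (fun v => v ≠ 0) (u ::ₘ U))
          = Multiset.card (U.filter (fun v => v ≠ 0)) + 1 := by
        rw [Multiset.filter_cons]; simp [hu]
      omega

/-- If `S` is a regular sequence over a finite abelian group `G` of length
at least `max (|G|/p + p - 2) (D G)` with `Σ(S) ≠ G`, then for every nonempty subsequence
`T` of `S`, the stabilizer of `Σ₀(T)` is trivial. -/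
theorem stabilizer_trivial (G : Type*) [AddCommGroup G] [Finite G] (h1 : 1 < Nat.card G)
    (p : ℕ) (hp : p = (Nat.card G).minFac)
    (S : Multiset G) (hreg : IsRegularSeq S)
    (hlen : max (Nat.card G / p + p - 2) (davenport G) ≤ Multiset.card S)
    (hne : seqSums S ≠ Set.univ) :
    ∀ T : Multiset G, T ≤ S → T ≠ 0 →
      {g : G | (fun x => g + x) '' seqSums0 T = seqSums0 T} = {0} := by
  classical
  intro T hTS hT0
  -- `0` is a subsequence sum
  have hduniv : davenport G ∈ {t : ℕ | ∀ S : Multiset G, t ≤ Multiset.card S →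
      ∃ T : Multiset G, T ≤ S ∧ T ≠ 0 ∧ T.sum = 0} :=
    Nat.sInf_mem ⟨Nat.card G, fun S hS => exists_zerosum S hS⟩
  obtain ⟨T0, hT0S, hT00, hT0sum⟩ := hduniv S (le_trans (le_max_right _ _) hlen)
  have h0S : (0 : G) ∈ seqSums S := ⟨T0, hT0S, hT00, hT0sum⟩
  have hS0eq : seqSums0 S = seqSums S := by
    apply Set.union_eq_self_of_subset_right
    intro x hx; rwa [Set.mem_singleton_iff.mp hx]
  have hAne : seqSums0 S ≠ Set.univ := by rw [hS0eq]; exact hne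
  set M : AddSubgroup G := stabSubgroup (seqSums0 S) with hM
  have hMbot : M = ⊥ := by
    by_contra hMne
    have hMtop : M ≠ ⊤ := by
      intro htop
      apply hAne
      apply Set.eq_univ_of_forall
      intro x
      have hx : x ∈ M := htop ▸ AddSubgroup.mem_top x
      have hxs := (mem_stabSubgroup.mp hx)
      rw [← hxs]
      exact ⟨0, zero_mem_seqSums0 S, by simp⟩
    set ψ := QuotientAddGroup.mk' M with hψ
    set B := seqSums0 (S.map ψ) with hB
    have hBim : B = ψ '' seqSums0 S := seqSums0_map ψ S
    have hpre : seqSums0 S = ψ ⁻¹' B := by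
      ext x
      constructor
      · intro hx; rw [Set.mem_preimage, hBim]; exact ⟨x, hx, rfl⟩
      · intro hx
        rw [Set.mem_preimage, hBim] at hx
        obtain ⟨y, hy, hxy⟩ := hx
        obtain ⟨n, hn, hny⟩ := (QuotientAddGroup.mk'_eq_mk' M).mp hxy
        have hns := mem_stabSubgroup.mp hn
        have hxny : x = n + y := by rw [← hny]; exact (add_comm y n)
        rw [hxny, ← hns]
        exact ⟨y, hy, rfl⟩
    have hBne : B ≠ Set.univ := by
      intro hBuniv
      apply hAne
      rw [hpre, hBuniv, Set.preimage_univ]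
    have hstB : ∀ g : G ⧸ M, (fun x => g + x) '' B = B → g = 0 := by
      intro g hg
      obtain ⟨g0, rfl⟩ := QuotientAddGroup.mk'_surjective M g
      have hsub : ∀ g0 : G, (fun x => ψ g0 + x) '' B = B →
          (fun x => g0 + x) '' seqSums0 S ⊆ seqSums0 S := by
        intro g0 hg0
        rintro x ⟨y, hy, rfl⟩
        rw [hpre, Set.mem_preimage]
        show ψ (g0 + y) ∈ B
        rw [map_add, ← hg0]
        refine ⟨ψ y, ?_, rfl⟩
        rw [hpre] at hy
        exact hy
      have hgsub := hsub g0 hg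
      have hgsub' := hsub (-g0) (by rw [map_neg]; exact neg_stab hg)
      have hg0M : g0 ∈ M := mem_stabSubgroup.mpr (stab_of_subsets hgsub hgsub')
      exact (QuotientAddGroup.eq_zero_iff g0).mpr hg0M
    have hkey := lemmaStar (S.map ψ) hstB
    have hBlt : (seqSums0 (S.map ψ)).ncard < M.index := by
      have hss : B ⊂ Set.univ := Set.ssubset_univ_iff.mpr hBne
      have := Set.ncard_lt_ncard hss (Set.toFinite _)
      rwa [Set.ncard_univ, ← AddSubgroup.index_eq_card] at this
    have hcount : Multiset.card ((S.map ψ).filter (fun v => v ≠ 0))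
        + Multiset.card (S.filter (fun g => g ∈ M)) = Multiset.card S := by
      have hfilter : (S.map ψ).filter (fun v => v ≠ 0)
          = (S.filter (fun s => ψ s ≠ 0)).map ψ := by
        rw [Multiset.filter_map]
        rfl
      rw [hfilter, Multiset.card_map]
      have hcongr : S.filter (fun s => ¬ (ψ s ≠ 0)) = S.filter (fun g => g ∈ M) := by
        apply Multiset.filter_congr
        intro x hx
        simp only [ne_eq, not_not]
        exact QuotientAddGroup.eq_zero_iff x
      rw [← hcongr]
      have := congrArg Multiset.card (Multiset.filter_add_not (fun s => ψ s ≠ 0) S)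
      rwa [Multiset.card_add] at this
    have hc := hreg M hMtop
    have hd2 : 2 ≤ Nat.card M := M.one_lt_card_iff_ne_bot.mpr hMne
    have he2 : 2 ≤ M.index := AddSubgroup.one_lt_index_of_ne_top hMtop
    have hde : Nat.card M * M.index = Nat.card G := AddSubgroup.card_mul_index M
    have hpd : p ≤ Nat.card M := hp ▸ Nat.minFac_le_of_dvd hd2 ⟨M.index, hde.symm⟩
    have hpe : p ≤ M.index := hp ▸ Nat.minFac_le_of_dvd he2 ⟨Nat.card M, by rw [← hde]; ring⟩
    have hppos : 0 < p := hp ▸ Nat.minFac_pos _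
    have hpdvd : p ∣ Nat.card G := hp ▸ Nat.minFac_dvd (Nat.card G)
    have harith : Nat.card M + M.index ≤ Nat.card G / p + p := by
      obtain ⟨a, ha⟩ := Nat.exists_eq_add_of_le hpd
      obtain ⟨b, hb⟩ := Nat.exists_eq_add_of_le hpe
      have key : p * (Nat.card M + M.index) ≤ p * (Nat.card G / p + p) := by
        have h4 : p * (Nat.card G / p + p) = Nat.card G + p * p := by
          rw [Nat.mul_add, Nat.mul_div_cancel' hpdvd]
        rw [h4, ← hde, ha, hb]
        nlinarith
      exact Nat.le_of_mul_le_mul_left key hppos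
    have hlen1 : Nat.card G / p + p - 2 ≤ Multiset.card S := le_trans (le_max_left _ _) hlen
    omega
  ext g
  simp only [Set.mem_setOf_eq, Set.mem_singleton_iff]
  constructor
  · intro hg
    have hgM : g ∈ M := by
      apply mem_stabSubgroup.mpr
      rw [seqSums0_decomp hTS]
      exact stab_add_right hg _
    rw [hMbot] at hgM
    exact AddSubgroup.mem_bot.mp hgM
  · rintro rfl
    ext x
    simp
end

section
/- Let G be a finite abelian group with smallest prime divisor p of |G|, and let A ⊆ G ∖ {0} be a subset with |A| ≥ 6p(p+1) + 1. Then there exists a zero-sum free subset B ⊆ A with |B| ≤ 6p + 1 and |Σ₀(B)| ≥ p|B| + 2. -/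
section ZSFAux

open Finset

variable {G : Type*} [AddCommGroup G] [DecidableEq G]

set_option linter.unusedSectionVars false

private lemma zsf_sub_sum_eq (U V : Finset G) :
    (∑ x ∈ V, x) - (∑ x ∈ U, x) = (∑ x ∈ V \ U, x) - (∑ x ∈ U \ V, x) := by
  have h1 := Finset.sum_inter_add_sum_sdiff V U (fun x => x)
  have h2 := Finset.sum_inter_add_sum_sdiff U V (fun x => x)
  rw [Finset.inter_comm] at h2
  rw [← h1, ← h2]
  abel

private lemma zsf_sum_powerset_two_pow (B : Finset G) :
    ∑ U ∈ B.powerset, 2 ^ (B.card - U.card) = 3 ^ B.card := by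
  induction B using Finset.induction with
  | empty => simp
  | @insert a B ha ih =>
    rw [Finset.powerset_insert, Finset.sum_union, Finset.sum_image]
    · have hc : (insert a B).card = B.card + 1 := Finset.card_insert_of_notMem ha
      have e1 : ∑ U ∈ B.powerset, 2 ^ ((insert a B).card - U.card)
          = ∑ U ∈ B.powerset, 2 * 2 ^ (B.card - U.card) := by
        apply Finset.sum_congr rfl
        intro U hU
        have := Finset.card_le_card (Finset.mem_powerset.mp hU)
        rw [hc, show B.card + 1 - U.card = (B.card - U.card) + 1 by omega]
        ring
      have e2 : ∑ U ∈ B.powerset, 2 ^ ((insert a B).card - (insert a U).card)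
          = ∑ U ∈ B.powerset, 2 ^ (B.card - U.card) := by
        apply Finset.sum_congr rfl
        intro U hU
        have haU : a ∉ U := fun h => ha (Finset.mem_powerset.mp hU h)
        rw [hc, Finset.card_insert_of_notMem haU]
        congr 1
        omega
      rw [e1, e2, ← Finset.mul_sum, ih, hc]
      ring
    · intro U hU V hV h
      have haU : a ∉ U := fun hx => ha (Finset.mem_powerset.mp hU hx)
      have haV : a ∉ V := fun hx => ha (Finset.mem_powerset.mp hV hx)
      have := congrArg (fun s => Finset.erase s a) h
      simpa [Finset.erase_insert, haU, haV] using this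
    · rw [Finset.disjoint_left]
      intro U hU hU2
      obtain ⟨V, hV, rfl⟩ := Finset.mem_image.mp hU2
      exact ha (Finset.mem_powerset.mp hU (Finset.mem_insert_self a V))

/-- Greedy existence of a subset of `A` of size `k` all of whose subset sums are distinct. -/
private lemma zsf_exists_dissociated (A : Finset G) (k : ℕ) (hk : ∀ i < k, 3 ^ i < A.card) :
    ∃ B ⊆ A, B.card = k ∧ ∀ T₁ ⊆ B, ∀ T₂ ⊆ B,
      (∑ x ∈ T₁, x) = (∑ x ∈ T₂, x) → T₁ = T₂ := by
  induction k with
  | zero =>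
    refine ⟨∅, Finset.empty_subset A, rfl, ?_⟩
    intro T₁ h₁ T₂ h₂ _
    rw [Finset.subset_empty.mp h₁, Finset.subset_empty.mp h₂]
  | succ j ih =>
    obtain ⟨B, hBA, hcard, hP⟩ := ih (fun i hi => hk i (Nat.lt_succ_of_lt hi))
    set D : Finset G := B.powerset.biUnion
      (fun U => ((B \ U).powerset).image fun V => (∑ x ∈ V, x) - (∑ x ∈ U, x)) with hD
    have hDcard : D.card ≤ 3 ^ j := by
      calc D.card ≤ ∑ U ∈ B.powerset,
            (((B \ U).powerset).image fun V => (∑ x ∈ V, x) - (∑ x ∈ U, x)).card :=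
            Finset.card_biUnion_le
        _ ≤ ∑ U ∈ B.powerset, 2 ^ (B.card - U.card) := by
            apply Finset.sum_le_sum
            intro U hU
            calc (((B \ U).powerset).image fun V => (∑ x ∈ V, x) - (∑ x ∈ U, x)).card
                ≤ ((B \ U).powerset).card := Finset.card_image_le
              _ = 2 ^ (B \ U).card := Finset.card_powerset _
              _ ≤ 2 ^ (B.card - U.card) := by
                  apply Nat.pow_le_pow_right (by norm_num)
                  rw [Finset.card_sdiff_of_subset (Finset.mem_powerset.mp hU)]
        _ = 3 ^ B.card := zsf_sum_powerset_two_pow B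
        _ = 3 ^ j := by rw [hcard]
    have hmemD : ∀ (U V : Finset G), U ⊆ B → V ⊆ B \ U →
        (∑ x ∈ V, x) - (∑ x ∈ U, x) ∈ D := by
      intro U V hU hV
      exact Finset.mem_biUnion.mpr ⟨U, Finset.mem_powerset.mpr hU,
        Finset.mem_image.mpr ⟨V, Finset.mem_powerset.mpr hV, rfl⟩⟩
    obtain ⟨a, haA, haD⟩ : ∃ a ∈ A, a ∉ D := by
      by_contra hcon
      push_neg at hcon
      have hsub : A ⊆ D := fun x hx => hcon x hx
      have := Finset.card_le_card hsub
      have := hk j (Nat.lt_succ_self j)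
      omega
    have haB : a ∉ B := by
      intro hab
      apply haD
      have : a = (∑ x ∈ ({a} : Finset G), x) - (∑ x ∈ (∅ : Finset G), x) := by simp
      rw [this]
      exact hmemD ∅ {a} (Finset.empty_subset B)
        (by simp [Finset.singleton_subset_iff, hab])
    have key : ∀ (U V : Finset G), U ⊆ B → V ⊆ B → a ≠ (∑ x ∈ V, x) - (∑ x ∈ U, x) := by
      intro U V hU hV heq
      apply haD
      rw [heq, zsf_sub_sum_eq]
      apply hmemD
      · exact fun x hx => hU (Finset.mem_sdiff.mp hx).1
      · intro x hx
        rw [Finset.mem_sdiff] at hx ⊢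
        exact ⟨hV hx.1, fun hx2 => hx.2 (Finset.mem_sdiff.mp hx2).1⟩
    refine ⟨insert a B, Finset.insert_subset haA hBA, by
      rw [Finset.card_insert_of_notMem haB, hcard], ?_⟩
    intro T₁ h₁ T₂ h₂ hsum
    have hsub : ∀ T : Finset G, T ⊆ insert a B → a ∉ T → T ⊆ B := by
      intro T hT haT x hx
      rcases Finset.mem_insert.mp (hT hx) with h | h
      · exact absurd (h ▸ hx) haT
      · exact h
    have herase : ∀ T : Finset G, T ⊆ insert a B → T.erase a ⊆ B := by
      intro T hT x hx
      rcases Finset.mem_insert.mp (hT (Finset.erase_subset a T hx)) with h | h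
      · exact absurd h (Finset.ne_of_mem_erase hx)
      · exact h
    by_cases ha1 : a ∈ T₁ <;> by_cases ha2 : a ∈ T₂
    · have e1 : ∑ x ∈ T₁, x = a + ∑ x ∈ T₁.erase a, x := (Finset.add_sum_erase _ _ ha1).symm
      have e2 : ∑ x ∈ T₂, x = a + ∑ x ∈ T₂.erase a, x := (Finset.add_sum_erase _ _ ha2).symm
      have : T₁.erase a = T₂.erase a := by
        apply hP _ (herase T₁ h₁) _ (herase T₂ h₂)
        rw [e1, e2] at hsum
        exact add_left_cancel hsum
      rw [← Finset.insert_erase ha1, ← Finset.insert_erase ha2, this]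
    · exfalso
      apply key (T₁.erase a) T₂ (herase T₁ h₁) (hsub T₂ h₂ ha2)
      rw [← hsum, (Finset.add_sum_erase _ _ ha1).symm]
      abel
    · exfalso
      apply key (T₂.erase a) T₁ (herase T₂ h₂) (hsub T₁ h₁ ha1)
      rw [hsum, (Finset.add_sum_erase _ _ ha2).symm]
      abel
    · exact hP _ (hsub T₁ h₁ ha1) _ (hsub T₂ h₂ ha2) hsum

end ZSFAux

private lemma zsf_grow : ∀ m : ℕ, 10 ≤ m → 3 ^ m * m ^ 2 ≤ 6 * (2 ^ m - 2) ^ 2 := by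
  intro m hm
  induction m, hm using Nat.le_induction with
  | base => norm_num
  | succ m hm ih =>
    have h2 : (2:ℕ) ≤ 2 ^ m := by
      calc (2:ℕ) ≤ 2 ^ 10 := by norm_num
        _ ≤ 2 ^ m := Nat.pow_le_pow_right (by norm_num) hm
    have e1 : 2 ^ (m+1) - 2 = 2 * (2 ^ m - 1) := by
      rw [pow_succ]
      omega
    have e2 : 2 ^ m - 2 ≤ 2 ^ m - 1 := by omega
    have step : 3 * (m+1) ^ 2 ≤ 4 * m ^ 2 := by nlinarith
    calc 3 ^ (m+1) * (m+1) ^ 2 = 3 ^ m * (3 * (m+1) ^ 2) := by ring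
      _ ≤ 3 ^ m * (4 * m ^ 2) := Nat.mul_le_mul_left _ step
      _ = 4 * (3 ^ m * m ^ 2) := by ring
      _ ≤ 4 * (6 * (2 ^ m - 2) ^ 2) := Nat.mul_le_mul_left _ ih
      _ ≤ 4 * (6 * (2 ^ m - 1) ^ 2) := by
          have := Nat.pow_le_pow_left e2 2
          omega
      _ = 6 * (2 * (2 ^ m - 1)) ^ 2 := by ring
      _ = 6 * (2 ^ (m+1) - 2) ^ 2 := by rw [e1]

private lemma zsf_arith (p m : ℕ) (hp : p.Prime) (h : 2 ^ m < p * m + 2) :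
    3 ^ m ≤ 6 * p * (p + 1) := by
  have hp2 : 2 ≤ p := hp.two_le
  have mono : ∀ c N : ℕ, c ≤ p → N ≤ 6 * c * (c+1) → N ≤ 6 * p * (p+1) := by
    intro c N hc hN
    calc N ≤ 6 * c * (c+1) := hN
      _ ≤ 6 * p * (p+1) := by
        apply Nat.mul_le_mul
        · omega
        · omega
  by_cases hm : m ≤ 9
  · interval_cases m
    · exact mono 2 _ hp2 (by norm_num)
    · exact mono 2 _ hp2 (by norm_num)
    · exact mono 2 _ hp2 (by norm_num)
    · exact mono 3 _ (by omega) (by norm_num)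
    · exact mono 4 _ (by omega) (by norm_num)
    · exact mono 7 _ (by omega) (by norm_num)
    · exact mono 11 _ (by omega) (by norm_num)
    · exact mono 19 _ (by omega) (by norm_num)
    · have hne : p ≠ 32 := by rintro rfl; norm_num at hp
      exact mono 33 _ (by omega) (by norm_num)
    · exact mono 57 _ (by omega) (by norm_num)
  · push_neg at hm
    have hm10 : 10 ≤ m := hm
    have h2 : (2:ℕ) ≤ 2 ^ m := by
      calc (2:ℕ) ≤ 2 ^ 10 := by norm_num
        _ ≤ 2 ^ m := Nat.pow_le_pow_right (by norm_num) hm10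
    have hpm : 2 ^ m - 2 ≤ p * m := by omega
    have h1 : 6 * (2 ^ m - 2) ^ 2 ≤ 6 * (p * m) ^ 2 := by
      have := Nat.pow_le_pow_left hpm 2
      omega
    have h3 : 3 ^ m * m ^ 2 ≤ 6 * p ^ 2 * m ^ 2 := by
      calc 3 ^ m * m ^ 2 ≤ 6 * (2 ^ m - 2) ^ 2 := zsf_grow m hm10
        _ ≤ 6 * (p * m) ^ 2 := h1
        _ = 6 * p ^ 2 * m ^ 2 := by ring
    have hmpos : 0 < m ^ 2 := by positivity
    have h4 : 3 ^ m ≤ 6 * p ^ 2 := Nat.le_of_mul_le_mul_right h3 hmpos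
    nlinarith

/-- If `A ⊆ G \ {0}` with `|A| ≥ 6p(p+1) + 1`, where `p` is the smallest
prime divisor of `|G|`, then there is a zero-sum free subset `B ⊆ A` with `|B| ≤ 6p + 1`
and `|Σ₀(B)| ≥ p|B| + 2`. -/
theorem exists_zsf_subset (G : Type*) [AddCommGroup G] [Finite G] (h1 : 1 < Nat.card G)
    (p : ℕ) (hp : p = (Nat.card G).minFac)
    (A : Finset G) (h0 : (0 : G) ∉ A) (hA : 6 * p * (p + 1) + 1 ≤ A.card) :
    ∃ B ⊆ A, (0 : G) ∉ setSums B ∧ B.card ≤ 6 * p + 1 ∧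
      p * B.card + 2 ≤ Nat.card (setSums0 B) := by
  classical
  have hpp : p.Prime := by
    rw [hp]; exact Nat.minFac_prime (by omega)
  have hp2 : 2 ≤ p := hpp.two_le
  have hex : ∃ k, p * k + 2 ≤ 2 ^ k := by
    refine ⟨2 * p + 2, ?_⟩
    have hlt : p < 2 ^ p := Nat.lt_two_pow_self
    have e : 2 ^ (2 * p + 2) = 4 * (2 ^ p * 2 ^ p) := by ring
    nlinarith
  set k := Nat.find hex with hkdef
  have hk1 : p * k + 2 ≤ 2 ^ k := Nat.find_spec hex
  have hkmin : ∀ i, i < k → 2 ^ i < p * i + 2 := by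
    intro i hi
    have := Nat.find_min hex hi
    omega
  have hkpos : 1 ≤ k := by
    by_contra hc
    push_neg at hc
    interval_cases k
    · simp at hk1
  have hkle : k ≤ 2 * p + 2 := by
    apply Nat.find_le
    have hlt : p < 2 ^ p := Nat.lt_two_pow_self
    have e : 2 ^ (2 * p + 2) = 4 * (2 ^ p * 2 ^ p) := by ring
    nlinarith
  have h3m : 3 ^ (k - 1) ≤ 6 * p * (p + 1) :=
    zsf_arith p (k - 1) hpp (hkmin (k - 1) (by omega))
  have hki : ∀ i < k, 3 ^ i < A.card := by
    intro i hi
    calc 3 ^ i ≤ 3 ^ (k - 1) := Nat.pow_le_pow_right (by norm_num) (by omega)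
      _ ≤ 6 * p * (p + 1) := h3m
      _ < A.card := by omega
  obtain ⟨B, hBA, hBcard, hP⟩ := zsf_exists_dissociated A k hki
  refine ⟨B, hBA, ?_, ?_, ?_⟩
  · rintro ⟨T, hT, hTne, hTsum⟩
    have : T = ∅ := hP T hT ∅ (Finset.empty_subset B) (by simpa using hTsum)
    exact hTne.ne_empty this
  · omega
  · have hset : setSums0 B = ↑(B.powerset.image fun T => ∑ x ∈ T, x) := by
      ext x
      simp only [setSums0, setSums, Set.mem_union, Set.mem_setOf_eq, Set.mem_singleton_iff,
        Finset.coe_image, Set.mem_image, Finset.mem_coe, Finset.mem_powerset]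
      constructor
      · rintro (⟨T, hT, _, hs⟩ | rfl)
        · exact ⟨T, hT, hs⟩
        · exact ⟨∅, Finset.empty_subset B, by simp⟩
      · rintro ⟨T, hT, rfl⟩
        rcases T.eq_empty_or_nonempty with rfl | hne
        · right; simp
        · left; exact ⟨T, hT, hne, rfl⟩
    rw [hset, Nat.card_coe_set_eq, Set.ncard_coe_finset]
    have himg : (B.powerset.image fun T => ∑ x ∈ T, x).card = 2 ^ k := by
      rw [Finset.card_image_of_injOn, Finset.card_powerset, hBcard]
      intro T₁ h₁ T₂ h₂ h
      exact hP T₁ (Finset.mem_powerset.mp h₁) T₂ (Finset.mem_powerset.mp h₂) h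
    rw [himg, hBcard]
    exact hk1
end

section
/- Let G be a finite abelian group with smallest prime divisor p of |G|, and let A ⊆ G ∖ {0} be a subset with |A| ≥ 6p(p+1) + 1. Then for every positive integer k ≤ 6p + 1 there exists a zero-sum free subset B ⊆ A such that either |B| = k, or |B| < k and |Σ(B)| ≥ p|B| + 1. -/
/-- If `A ⊆ G \ {0}` with `|A| ≥ 6p(p+1) + 1`, where `p` is the smallest
prime divisor of `|G|`, then for every positive `k ≤ 6p + 1` there is a zero-sum free
subset `B ⊆ A` with either `|B| = k`, or `|B| < k` and `|Σ(B)| ≥ p|B| + 1`. -/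
theorem exists_zsf_subset_each_k (G : Type*) [AddCommGroup G] [Finite G]
    (h1 : 1 < Nat.card G) (p : ℕ) (hp : p = (Nat.card G).minFac)
    (A : Finset G) (h0 : (0 : G) ∉ A) (hA : 6 * p * (p + 1) + 1 ≤ A.card)
    (k : ℕ) (hk1 : 1 ≤ k) (hk : k ≤ 6 * p + 1) :
    ∃ B ⊆ A, (0 : G) ∉ setSums B ∧
      (B.card = k ∨ (B.card < k ∧ p * B.card + 1 ≤ Nat.card (setSums B))) := by
  classical
  have hp2 : 2 ≤ p := hp ▸ (Nat.minFac_prime (by omega)).two_le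
  set F := A.powerset.filter (fun B => (0 : G) ∉ setSums B ∧ B.card ≤ k) with hF
  have hne : F.Nonempty := by
    refine ⟨∅, ?_⟩
    simp only [hF, Finset.mem_filter, Finset.mem_powerset]
    refine ⟨Finset.empty_subset _, ?_, by simp⟩
    rintro ⟨T, hT, ⟨x, hx⟩, -⟩
    exact absurd (hT hx) (by simp)
  obtain ⟨B, hBF, hBmax⟩ := F.exists_max_image Finset.card hne
  simp only [hF, Finset.mem_filter, Finset.mem_powerset] at hBF
  obtain ⟨hBA, hBzsf, hBk⟩ := hBF
  refine ⟨B, hBA, hBzsf, ?_⟩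
  rcases eq_or_lt_of_le hBk with heq | hlt
  · exact Or.inl heq
  right
  refine ⟨hlt, ?_⟩
  -- every a ∈ A \ B has -a ∈ setSums B
  have key : ∀ a ∈ A, a ∉ B → -a ∈ setSums B := by
    intro a haA haB
    have hnot : (0 : G) ∈ setSums (insert a B) := by
      by_contra hzsf
      have hmem : insert a B ∈ F := by
        simp only [hF, Finset.mem_filter, Finset.mem_powerset]
        exact ⟨Finset.insert_subset haA hBA, hzsf,
          by rw [Finset.card_insert_of_notMem haB]; omega⟩
      have := hBmax _ hmem
      rw [Finset.card_insert_of_notMem haB] at this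
      omega
    obtain ⟨T, hT, hTne, hTsum⟩ := hnot
    have haT : a ∈ T := by
      by_contra h
      exact hBzsf ⟨T, fun x hx =>
        (Finset.mem_insert.1 (hT hx)).resolve_left (fun he => h (he ▸ hx)),
        hTne, hTsum⟩
    have hsub : T.erase a ⊆ B := by
      intro x hx
      have hxa := Finset.ne_of_mem_erase hx
      exact (Finset.mem_insert.1 (hT (Finset.mem_of_mem_erase hx))).resolve_left hxa
    have hsum : a + ∑ g ∈ T.erase a, g = 0 := by
      rw [← Finset.insert_erase haT, Finset.sum_insert (Finset.notMem_erase a T)] at hTsum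
      exact hTsum
    have hne' : (T.erase a).Nonempty := by
      rw [Finset.nonempty_iff_ne_empty]
      intro h
      rw [h, Finset.sum_empty, add_zero] at hsum
      exact h0 (hsum ▸ haA)
    exact ⟨T.erase a, hsub, hne', eq_neg_of_add_eq_zero_right hsum⟩
  -- the image of A \ B under negation injects into setSums B
  have himg : (((A \ B).image (fun a => -a) : Finset G) : Set G) ⊆ setSums B := by
    intro x hx
    simp only [Finset.coe_image, Set.mem_image, Finset.mem_coe, Finset.mem_sdiff] at hx
    obtain ⟨a, ⟨haA, haB⟩, rfl⟩ := hx
    exact key a haA haB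
  have hcard : (A \ B).card ≤ Nat.card (setSums B) := by
    calc (A \ B).card = ((A \ B).image (fun a => -a)).card :=
          (Finset.card_image_of_injective _ neg_injective).symm
      _ = (((A \ B).image (fun a => -a) : Finset G) : Set G).ncard :=
          (Set.ncard_coe_finset _).symm
      _ ≤ (setSums B).ncard := Set.ncard_le_ncard himg (Set.toFinite _)
      _ = Nat.card (setSums B) := (Nat.card_coe_set_eq _).symm
  have hsd : (A \ B).card = A.card - B.card := Finset.card_sdiff_of_subset hBA
  have hBA' : B.card ≤ A.card := Finset.card_le_card hBA
  have hmul : p * B.card ≤ p * (6 * p) := Nat.mul_le_mul_left _ (by omega)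
  have hexp : 6 * p * (p + 1) = p * (6 * p) + 6 * p := by ring
  omega
end
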